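/- For every stable coloring f : [ℕ]² → ℕ (meaning lim_s f(x,s) exists for every x), if there exists an infinite set H that is thin for the limit coloring f̃(x) = lim_s f(x,s) (i.e. f̃ omits some value on H), then H together with f computes an infinite set thin for f itself. -/

import Mathlib

open Classical Filter

noncomputable section

/-- Codes for partial functions recursive in an oracle. -/
inductive OCode : Type
  | zero | succ | left | right | oracle
  | pair (a b : OCode) | comp (a b : OCode) | prec (a b : OCode) | rfind' (a : OCode)

/-- Evaluation of an oracle code with oracle `O`. -/
def OCode.eval (O : ℕ →. ℕ) : OCode → ℕ →. ℕ
  | .zero => pure 0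
  | .succ => Nat.succ
  | .left => ↑fun n : ℕ => n.unpair.1
  | .right => ↑fun n : ℕ => n.unpair.2
  | .oracle => O
  | .pair a b => fun n => Nat.pair <$> a.eval O n <*> b.eval O n
  | .comp a b => fun n => b.eval O n >>= a.eval O
  | .prec a b => Nat.unpaired fun m n =>
      n.rec (a.eval O m) fun y IH => do let i ← IH; b.eval O (Nat.pair m (Nat.pair y i))
  | .rfind' a => fun n => Nat.rfind fun m => (fun k => k = 0) <$> a.eval O (Nat.pair n m)

/-- An injective numbering of oracle codes. -/
def OCode.encodeC : OCode → ℕ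
  | .zero => Nat.pair 0 0
  | .succ => Nat.pair 1 0
  | .left => Nat.pair 2 0
  | .right => Nat.pair 3 0
  | .oracle => Nat.pair 4 0
  | .pair a b => Nat.pair 5 (Nat.pair a.encodeC b.encodeC)
  | .comp a b => Nat.pair 6 (Nat.pair a.encodeC b.encodeC)
  | .prec a b => Nat.pair 7 (Nat.pair a.encodeC b.encodeC)
  | .rfind' a => Nat.pair 8 a.encodeC

/-- `f` is partial recursive in the oracle `O`. -/
def RecIn (O : ℕ →. ℕ) (f : ℕ →. ℕ) : Prop := ∃ c : OCode, c.eval O = f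

/-- The `e`-th partial function recursive in `O` (`Φ_e^O`). -/
def phi (O : ℕ →. ℕ) (e : ℕ) : ℕ →. ℕ :=
  if h : ∃ c : OCode, c.encodeC = e then h.choose.eval O else fun _ => Part.none

/-- The characteristic function of a set of naturals, as an oracle. -/
def chOracle (X : Set ℕ) : ℕ →. ℕ := fun n => Part.some (if n ∈ X then 1 else 0)

/-- A total function as an oracle. -/
def fnOracle (f : ℕ → ℕ) : ℕ →. ℕ := fun n => Part.some (f n)

/-- A two-variable total function as an oracle. -/
def pairFnOracle (f : ℕ → ℕ → ℕ) : ℕ →. ℕ :=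
  fun n => Part.some (f n.unpair.1 n.unpair.2)

/-- The Turing jump of a set `X` : the halting problem relative to `X`. -/
def jumpSet (X : Set ℕ) : Set ℕ := {e | (phi (chOracle X) e e).Dom}

/-- The effective join of two sets of naturals. -/
def joinSet (A B : Set ℕ) : Set ℕ :=
  {n | (n % 2 = 0 ∧ n / 2 ∈ A) ∨ (n % 2 = 1 ∧ n / 2 ∈ B)}

/-- The join of two oracles. -/
def joinO (O₁ O₂ : ℕ →. ℕ) : ℕ →. ℕ :=
  fun n => if n % 2 = 0 then O₁ (n / 2) else O₂ (n / 2)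

/-- Turing reducibility between sets of naturals. -/
def setLEset (A B : Set ℕ) : Prop :=
  RecIn (chOracle B) (fnOracle fun n => if n ∈ A then 1 else 0)


/-!
Let `c` be a colour omitted by `F` on `H`, and build `A` greedily: `n ∈ A` iff `n ∈ H` and
`f m n ≠ c` for every earlier `m ∈ A`. Then `[A]²` omits `c` by construction. If `A` were finite,
then, as every `m ∈ A` lies in `H` and so `f m s = F m ≠ c` for all large `s`, any sufficiently
large `s ∈ H` would be added to `A`; hence `A` is infinite. Deciding `n ∈ A` only consults `H` and
`f` below a primitive recursive bound in `n`, so `A` is computable from `H ⊕ f`.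
-/

open Encodable Denumerable

theorem recIn_of_recursiveIn {O f : ℕ →. ℕ} (h : Nat.RecursiveIn {O} f) : RecIn O f := by
  induction h with
  | zero => exact ⟨.zero, rfl⟩
  | succ => exact ⟨.succ, rfl⟩
  | left => exact ⟨.left, rfl⟩
  | right => exact ⟨.right, rfl⟩
  | oracle g hg => exact ⟨.oracle, (Set.mem_singleton_iff.1 hg).symm⟩
  | pair _ _ ihf ihh =>
    obtain ⟨a, rfl⟩ := ihf; obtain ⟨b, rfl⟩ := ihh; exact ⟨.pair a b, rfl⟩
  | comp _ _ ihf ihh =>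
    obtain ⟨a, rfl⟩ := ihf; obtain ⟨b, rfl⟩ := ihh; exact ⟨.comp a b, rfl⟩
  | prec _ _ ihf ihh =>
    obtain ⟨a, rfl⟩ := ihf; obtain ⟨b, rfl⟩ := ihh; exact ⟨.prec a b, rfl⟩
  | rfind _ ihf =>
    obtain ⟨a, rfl⟩ := ihf; exact ⟨.rfind' a, rfl⟩

namespace Nat.RecursiveIn

variable {O : Set (ℕ →. ℕ)}

theorem of_primrec {g : ℕ → ℕ} (hg : _root_.Primrec g) : Nat.RecursiveIn O (fnOracle g) :=
  Nat.Primrec.recursiveIn (_root_.Primrec.nat_iff.1 hg)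

theorem comp_total {f g : ℕ → ℕ} (hf : Nat.RecursiveIn O (fnOracle f))
    (hg : Nat.RecursiveIn O (fnOracle g)) : Nat.RecursiveIn O (fnOracle fun n => f (g n)) :=
  (hf.comp hg).of_eq fun n => Part.bind_some (g n) (fnOracle f)

theorem pair_total {f g : ℕ → ℕ} (hf : Nat.RecursiveIn O (fnOracle f))
    (hg : Nat.RecursiveIn O (fnOracle g)) :
    Nat.RecursiveIn O (fnOracle fun n => Nat.pair (f n) (g n)) :=
  (hf.pair hg).of_eq fun n => by simp [fnOracle, Seq.seq]

open _root_.Primrec in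
theorem initialSegment {o : ℕ → ℕ} (ho : fnOracle o ∈ O) :
    Nat.RecursiveIn O (fnOracle fun k => encode ((List.range k).map o)) := by
  have hfst : _root_.Primrec fun n : ℕ => n.unpair.1 := fst.comp _root_.Primrec.unpair
  have hsnd : _root_.Primrec fun n : ℕ => n.unpair.2 := snd.comp _root_.Primrec.unpair
  have happend : Nat.RecursiveIn O (fnOracle fun q =>
      encode (ofNat (List ℕ) q.unpair.1.unpair.2.unpair.2 ++ [q.unpair.2])) :=
    of_primrec <| encode_iff.2 <|
      list_concat.comp ((Primrec.ofNat _).comp (hsnd.comp (hsnd.comp hfst))) hsnd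
  have hstep : Nat.RecursiveIn O (fnOracle fun t =>
      encode (ofNat (List ℕ) t.unpair.2.unpair.2 ++ [o t.unpair.2.unpair.1])) :=
    (happend.comp_total ((of_primrec _root_.Primrec.id).pair_total
      ((oracle _ ho).comp_total (of_primrec (hfst.comp hsnd))))).of_eq fun t => by
        simp only [Nat.unpair_pair, id]
  refine ((of_primrec (const 0)).prec hstep |>.comp
    (of_primrec (Primrec₂.natPair.comp (const 0) _root_.Primrec.id))).of_eq fun k => ?_
  simp only [fnOracle, id_eq, unpair_pair, Part.bind_eq_bind, Part.bind_some]
  induction k with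
  | zero => rfl
  | succ k ih =>
    change Part.bind (Nat.rec _ _ k) _ = _
    rw [ih, Part.bind_some, ofNat_encode, List.range_succ, List.map_append]
    rfl

open _root_.Primrec in
theorem of_primrec_initialSegment {o g : ℕ → ℕ} (ho : fnOracle o ∈ O) {G : List ℕ → ℕ → ℕ}
    (hG : Primrec₂ G) {B : ℕ → ℕ} (hB : _root_.Primrec B)
    (hg : ∀ n, g n = G ((List.range (B n)).map o) n) : Nat.RecursiveIn O (fnOracle g) := by
  have hG' : Nat.RecursiveIn O (fnOracle fun q => G (ofNat (List ℕ) q.unpair.1) q.unpair.2) :=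
    of_primrec <| hG.comp ((Primrec.ofNat _).comp (fst.comp _root_.Primrec.unpair))
      (snd.comp _root_.Primrec.unpair)
  refine (hG'.comp_total (((initialSegment ho).comp_total (of_primrec hB)).pair_total
    (of_primrec _root_.Primrec.id))).of_eq fun n => ?_
  simp only [fnOracle, unpair_pair, ofNat_encode, id, hg]

end Nat.RecursiveIn

-- Quantifying over `Fin n` lets the recursive call be seen to decrease.
def greedy (p : ℕ → Prop) [DecidablePred p] (col : ℕ → ℕ → ℕ) (c n : ℕ) : Bool :=
  decide (p n ∧ ∀ m : Fin n, greedy p col c m = true → col m n ≠ c)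

section Greedy

variable {p : ℕ → Prop} [DecidablePred p] {col : ℕ → ℕ → ℕ} {c : ℕ}

theorem greedy_eq_true {n : ℕ} :
    greedy p col c n = true ↔ p n ∧ ∀ m < n, greedy p col c m = true → col m n ≠ c := by
  rw [greedy]; simp [Fin.forall_iff]

theorem greedy_col_ne {m n : ℕ} (hm : greedy p col c m = true) (hn : greedy p col c n = true)
    (hmn : m < n) : col m n ≠ c :=
  (greedy_eq_true.1 hn).2 m hmn hm

theorem greedy_infinite (hp : {n | p n}.Infinite)
    (hcol : ∀ m, p m → ∀ᶠ s in atTop, col m s ≠ c) : {n | greedy p col c n = true}.Infinite := by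
  intro hfin
  have havoid : ∀ᶠ s in atTop, ∀ m ∈ {n | greedy p col c n = true}, col m s ≠ c :=
    (eventually_all_finite hfin).2 fun m hm => hcol m (greedy_eq_true.1 hm).1
  obtain ⟨b, hb⟩ := hfin.bddAbove
  obtain ⟨s, hps, hs, hbs⟩ := ((Nat.frequently_atTop_iff_infinite.2 hp).and_eventually
    (havoid.and (eventually_gt_atTop b))).exists
  have hsA : greedy p col c s = true := greedy_eq_true.2 ⟨hps, fun m _ hm => hs m hm⟩
  exact absurd (hb hsA) (not_le.2 hbs)

theorem greedy_congr {p' : ℕ → Prop} [DecidablePred p'] {col' : ℕ → ℕ → ℕ} {n : ℕ}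
    (hp : ∀ k ≤ n, p k ↔ p' k) (hcol : ∀ m k, m < k → k ≤ n → col m k = col' m k) :
    greedy p col c n = greedy p' col' c n := by
  induction n using Nat.strong_induction_on with
  | _ n ih =>
    rw [Bool.eq_iff_iff, greedy_eq_true, greedy_eq_true]
    refine and_congr (hp n le_rfl) (forall₂_congr fun m hm => ?_)
    rw [ih m hm (fun k hk => hp k (by omega)) (fun i k hik hk => hcol i k hik (by omega)),
      hcol m n hm le_rfl]

end Greedy

open Primrec in
theorem primrec₂_greedy {α : Type*} [Primcodable α] {p : α → ℕ → Prop} [DecidableRel p]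
    (hp : PrimrecRel p) {col : α → ℕ → ℕ → ℕ}
    (hcol : Primrec₂ fun a (x : ℕ × ℕ) => col a x.1 x.2) (c : ℕ) :
    Primrec₂ fun a n => greedy (p a) (col a) c n := by
  have hearlier : PrimrecRel fun m (x : α × List Bool) =>
      x.2.getD m false = false ∨ col x.1 m x.2.length ≠ c :=
    PrimrecPred.or (Primrec.eq.comp ((list_getD false).comp (snd.comp snd) fst) (const false))
      (PrimrecPred.not (Primrec.eq.comp
        (hcol.comp (fst.comp snd) (Primrec₂.pair.comp fst (list_length.comp (snd.comp snd))))
        (const c)))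
  have hstep : PrimrecRel fun a (L : List Bool) => p a L.length ∧
      ∀ m ∈ List.range L.length, L.getD m false = false ∨ col a m L.length ≠ c :=
    PrimrecPred.and (hp.comp fst (list_length.comp snd))
      (hearlier.forall_mem_list.comp (list_range.comp (list_length.comp snd)) Primrec.id)
  refine nat_strong_rec _ (Primrec₂.option_some_iff.2 hstep.decide) fun a n => ?_
  simp only [List.length_map, List.length_range, List.mem_range, Option.some.injEq]
  rw [Bool.eq_iff_iff, decide_eq_true_iff, greedy_eq_true]
  refine and_congr_right fun _ => forall₂_congr fun m hm => ?_
  simp [List.getD_eq_getElem?_getD, hm, or_iff_not_imp_left]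

def joinFn (H : Set ℕ) (f : ℕ → ℕ → ℕ) (n : ℕ) : ℕ :=
  if n % 2 = 0 then (if n / 2 ∈ H then 1 else 0) else f (n / 2).unpair.1 (n / 2).unpair.2

theorem joinO_chOracle_pairFnOracle (H : Set ℕ) (f : ℕ → ℕ → ℕ) :
    joinO (chOracle H) (pairFnOracle f) = fnOracle (joinFn H f) := by
  funext n
  unfold joinO chOracle pairFnOracle fnOracle joinFn
  split <;> rfl

theorem joinFn_two_mul (H : Set ℕ) (f : ℕ → ℕ → ℕ) (k : ℕ) :
    joinFn H f (2 * k) = if k ∈ H then 1 else 0 := by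
  simp [joinFn]

theorem joinFn_two_mul_pair_add_one (H : Set ℕ) (f : ℕ → ℕ → ℕ) (m k : ℕ) :
    joinFn H f (2 * Nat.pair m k + 1) = f m k := by
  simp [joinFn, Nat.add_mod, Nat.add_div]

open Primrec in
theorem recursiveIn_greedy_joinFn (H : Set ℕ) (f : ℕ → ℕ → ℕ) (c : ℕ) :
    Nat.RecursiveIn {fnOracle (joinFn H f)} (fnOracle fun n => (greedy (· ∈ H) f c n).toNat) := by
  have hread : Primrec₂ fun (l : List ℕ) i => l.getD i 0 := list_getD 0
  refine Nat.RecursiveIn.of_primrec_initialSegment (Set.mem_singleton _)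
    (G := fun l n => (greedy (fun k => l.getD (2 * k) 0 = 1)
      (fun m k => l.getD (2 * Nat.pair m k + 1) 0) c n).toNat)
    -- deciding `n` reads `joinFn` only at `2 * k` and `2 * Nat.pair m k + 1` for `m < k ≤ n`
    (B := fun n => 2 * (n + 1) ^ 2) ?_ ?_ fun n => ?_
  · refine (dom_bool _).comp₂ (primrec₂_greedy ?_ ?_ c)
    · exact Primrec.eq.comp (hread.comp fst (nat_mul.comp (const 2) snd)) (const 1)
    · exact hread.comp fst (succ.comp (nat_mul.comp (const 2)
        (Primrec₂.natPair.comp (fst.comp snd) (snd.comp snd))))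
  · exact (nat_mul.comp (const 2) (nat_mul.comp succ succ)).of_eq fun n => by
      simp only [Nat.succ_eq_add_one]; ring
  · have hread_eq : ∀ i < 2 * (n + 1) ^ 2,
        ((List.range (2 * (n + 1) ^ 2)).map (joinFn H f)).getD i 0 = joinFn H f i :=
      fun i hi => by simp [hi]
    refine congrArg Bool.toNat (greedy_congr (fun k hk => ?_) fun m k hmk hk => ?_)
    · rw [hread_eq _ (by nlinarith), joinFn_two_mul]
      simp
    · have hpair : Nat.pair m k < (n + 1) ^ 2 :=
        (Nat.pair_lt_max_add_one_sq m k).trans_le (Nat.pow_le_pow_left (by omega) 2)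
      rw [hread_eq _ (by omega), joinFn_two_mul_pair_add_one]

theorem stmt5 (f : ℕ → ℕ → ℕ) (F : ℕ → ℕ)
    (hstab : ∀ x, ∀ᶠ s in atTop, f x s = F x)
    (H : Set ℕ) (hinf : H.Infinite)
    (hthin : ∃ c : ℕ, ∀ x ∈ H, F x ≠ c) :
    ∃ A : Set ℕ, A.Infinite ∧ (∃ c : ℕ, ∀ x ∈ A, ∀ s ∈ A, x < s → f x s ≠ c) ∧
      RecIn (joinO (chOracle H) (pairFnOracle f))
        (fnOracle fun n => if n ∈ A then 1 else 0) := by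
  obtain ⟨c, hc⟩ := hthin
  refine ⟨{n | greedy (· ∈ H) f c n = true}, greedy_infinite hinf fun m hm => ?_,
    ⟨c, fun x hx s hs => greedy_col_ne hx hs⟩, ?_⟩
  · exact (hstab m).mono fun s hs => hs ▸ hc m hm
  · rw [joinO_chOracle_pairFnOracle]
    convert recIn_of_recursiveIn (recursiveIn_greedy_joinFn H f c) using 3
    simp [Bool.toNat]
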